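/- arXiv:1407.1392 — 2 statements merged into one kernel-verified Lean document; each statement's English description precedes it below -/
import Mathlib

section
/- Assume in addition that G is bipartite. Then G is strongly distance-regular if and only if λ1 = √k. -/
open Finset

attribute [local instance] Classical.propDecidable

/-- The distance-`d` graph of `G`: two distinct vertices are adjacent iff
they are at distance `d` in `G`. -/
def SimpleGraph.distGraph {V : Type*} (G : SimpleGraph V) (d : ℕ) : SimpleGraph V where
  Adj u v := u ≠ v ∧ G.dist u v = d
  symm := ⟨fun u v h => ⟨h.1.symm, by rw [SimpleGraph.dist_comm]; exact h.2⟩⟩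
  loopless := ⟨fun u h => h.1 rfl⟩

/-- `G` is strongly distance-regular (for diameter `d`) if its distance-`d` graph
is strongly regular. -/
def SimpleGraph.IsStronglyDRG {V : Type*} [Fintype V] (G : SimpleGraph V) (d : ℕ) : Prop :=
  ∃ n k ℓ μ, (G.distGraph d).IsSRGWith n k ℓ μ

/-- `G` is distance-regular with diameter `d` and intersection numbers `c i, a i, b i`. -/
def SimpleGraph.IsDistRegular {V : Type*} [Fintype V] (G : SimpleGraph V)
    (d : ℕ) (c a b : ℕ → ℕ) : Prop :=
  ∀ i ≤ d, ∀ u v : V, G.dist u v = i →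
    ((G.neighborFinset v).filter (fun w => G.dist u w = i - 1)).card = c i ∧
    ((G.neighborFinset v).filter (fun w => G.dist u w = i)).card = a i ∧
    ((G.neighborFinset v).filter (fun w => G.dist u w = i + 1)).card = b i

/-- The adjacency matrix of `G`, viewed as an endomorphism of `V → ℝ`. -/
noncomputable def SimpleGraph.adjEnd {V : Type*} [Fintype V] [DecidableEq V]
    (G : SimpleGraph V) : Module.End ℝ (V → ℝ) :=
  Matrix.toLin' (G.adjMatrix ℝ)

/-- The (real) adjacency spectrum of `G` consists exactly of the distinct eigenvalues
`lam 0 > lam 1 > ⋯ > lam d`, where `lam i` has multiplicity `m i`. -/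
def SimpleGraph.HasSpectrum {V : Type*} [Fintype V] [DecidableEq V] (G : SimpleGraph V)
    {d : ℕ} (lam : Fin (d + 1) → ℝ) (m : Fin (d + 1) → ℕ) : Prop :=
  StrictAnti lam ∧
  (∀ i, Module.End.HasEigenvalue G.adjEnd (lam i)) ∧
  (∀ μ : ℝ, Module.End.HasEigenvalue G.adjEnd μ → ∃ i, μ = lam i) ∧
  (∀ i, m i = Module.finrank ℝ (Module.End.eigenspace G.adjEnd (lam i)))

/-- `G` is antipodal (for diameter `d`): being equal or at distance `d`
is an equivalence relation on the vertices. -/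
def SimpleGraph.IsAntipodal {V : Type*} (G : SimpleGraph V) (d : ℕ) : Prop :=
  Equivalence (fun u v => u = v ∨ G.dist u v = d)

/-- `G` is `r`-antipodal (for diameter `d`): antipodal with all classes of size `r`. -/
def SimpleGraph.IsAntipodalWith {V : Type*} (G : SimpleGraph V) (d r : ℕ) : Prop :=
  G.IsAntipodal d ∧ ∀ u : V, Nat.card {v : V | u = v ∨ G.dist u v = d} = r

/-!
Bipartiteness gives `a i = 0` and `c 4 = k`, so the distance matrices `Aᵢ` satisfy the
three-term recurrence `A Aᵢ = bᵢ₋₁ Aᵢ₋₁ + cᵢ₊₁ Aᵢ₊₁`; eliminating `A₂, A₃, A₄` yields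
`A⁵ + β A = α A³` with `α = k + b₁c₂ + b₂c₃ + b₃k` and `β = b₂c₃k + b₃k(k + b₁c₂)`.
The spectrum of a bipartite graph is symmetric, so `λ₁ > 0`, and `k²`, `λ₁²` are the two
roots of `t² - α t + β`. Comparing coefficients gives `b₁c₂ (1 - b₃) = (k - 1)(k - λ₁²)`,
so `b₃ = 1` iff `λ₁² = k`.

On the combinatorial side, adjacent vertices have no common neighbour in the distance-4 graph
(parity), so that graph is strongly regular iff it is a disjoint union of cliques, i.e. iff being
at distance 4 is transitive. Two vertices at distance 4 from `u` are at even distance from each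
other; distance 2 would give a vertex at distance 3 from `u` with two neighbours at distance 4,
so transitivity holds iff `b₃ = 1`.
-/

theorem pow_five_add_nsmul_eq_nsmul_pow_three {R : Type*} [Semiring R] {A A₂ A₃ A₄ : R}
    {k b₁ b₂ b₃ c₂ c₃ c₄ : ℕ} (h₁ : A * A = k • 1 + c₂ • A₂) (h₂ : A * A₂ = b₁ • A + c₃ • A₃)
    (h₃ : A * A₃ = b₂ • A₂ + c₄ • A₄) (h₄ : A * A₄ = b₃ • A₃) :
    A ^ 5 + (b₂ * c₃ * k + b₃ * c₄ * (k + b₁ * c₂)) • A =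
      (k + b₁ * c₂ + b₂ * c₃ + b₃ * c₄) • A ^ 3 := by
  have h₃' : A ^ 3 = (k + b₁ * c₂) • A + (c₂ * c₃) • A₃ := by
    rw [pow_succ', pow_two, h₁, mul_add, mul_smul_comm, mul_smul_comm, mul_one, h₂]
    module
  have h₄' : A ^ 4 = ((k + b₁ * c₂) * k) • 1 + ((k + b₁ * c₂) * c₂ + c₂ * c₃ * b₂) • A₂ +
      (c₂ * c₃ * c₄) • A₄ := by
    rw [pow_succ', h₃', mul_add, mul_smul_comm, mul_smul_comm, h₁, h₃]
    module
  rw [pow_succ', h₄', h₃', mul_add, mul_add, mul_smul_comm, mul_smul_comm, mul_smul_comm, mul_one,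
    h₂, h₄]
  module

theorem Module.End.HasEigenvalue.pow_five_add_mul_eq_mul_pow_three {K M : Type*} [Field K]
    [AddCommGroup M] [Module K M] {f : Module.End K M} {μ : K} (hμ : f.HasEigenvalue μ)
    {α β : ℕ} (h : f ^ 5 + β • f = α • f ^ 3) : μ ^ 5 + β * μ = α * μ ^ 3 := by
  obtain ⟨x, hx⟩ := hμ.exists_hasEigenvector
  have hfx := congr($h x)
  simp only [LinearMap.add_apply, LinearMap.smul_apply, hx.pow_apply, hx.apply_eq_smul,
    ← Nat.cast_smul_eq_nsmul K, smul_smul, ← add_smul] at hfx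
  exact smul_left_injective K hx.2 hfx

theorem eq_sq_add_sq_and_eq_sq_mul_sq {x y α β : ℝ} (hy : 0 < y) (hyx : y < x)
    (hx : x ^ 5 + β * x = α * x ^ 3) (hy' : y ^ 5 + β * y = α * y ^ 3) :
    α = x ^ 2 + y ^ 2 ∧ β = x ^ 2 * y ^ 2 := by
  have hx₄ : x ^ 4 + β = α * x ^ 2 := by
    have : x * (x ^ 4 + β) = x * (α * x ^ 2) := by linear_combination hx
    exact mul_left_cancel₀ (hy.trans hyx).ne' this
  have hy₄ : y ^ 4 + β = α * y ^ 2 := by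
    have : y * (y ^ 4 + β) = y * (α * y ^ 2) := by linear_combination hy'
    exact mul_left_cancel₀ hy.ne' this
  have hα : α = x ^ 2 + y ^ 2 := by
    have : (x ^ 2 - y ^ 2) * α = (x ^ 2 - y ^ 2) * (x ^ 2 + y ^ 2) := by
      linear_combination hy₄ - hx₄
    exact mul_left_cancel₀ (by nlinarith) this
  exact ⟨hα, by linear_combination hx₄ + x ^ 2 * hα⟩

theorem StrictAnti.pos_one_of_forall_exists_neg {n : ℕ} {lam : Fin (n + 4) → ℝ}
    (h : StrictAnti lam) (hneg : ∀ i, ∃ j, lam j = -lam i) : 0 < lam 1 := by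
  by_contra! hle
  obtain ⟨i, hi⟩ := hneg 2
  have h12 : lam 2 < lam 1 := h (by simp [Fin.lt_def, Nat.mod_eq_of_lt])
  have hi0 : i = 0 := by
    have := h.lt_iff_gt.mp (show lam 1 < lam i by linarith)
    ext; simp [Fin.lt_def] at this; omega
  obtain ⟨j, hj⟩ := hneg (Fin.last _)
  have h2 : lam (Fin.last _) < lam 2 := h (by simp [Fin.lt_def, Nat.mod_eq_of_lt])
  have hj0 : lam j ≤ lam 0 := h.antitone (Fin.zero_le j)
  subst hi0
  linarith

namespace SimpleGraph

variable {V : Type*} {G : SimpleGraph V}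

theorem exists_adj_dist_eq_of_dist_eq_succ {u v : V} {j : ℕ} (h : G.dist u v = j + 1) :
    ∃ x, G.Adj u x ∧ G.dist x v = j := by
  obtain ⟨p, hp⟩ := exists_walk_of_dist_ne_zero (by omega : G.dist u v ≠ 0)
  cases p with
  | nil => simp at h
  | cons hadj q =>
    refine ⟨_, hadj, le_antisymm ?_ ?_⟩
    · have := dist_le q
      simp only [Walk.length_cons] at hp
      omega
    · have := hadj.reachable.dist_triangle_left v
      rw [dist_eq_one_iff_adj.mpr hadj] at this
      omega

theorem exists_dist_eq_of_le {u v : V} {j i : ℕ} (h : G.dist u v = j) (hij : i ≤ j) :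
    ∃ x, G.dist x v = i := by
  induction j generalizing u with
  | zero => exact ⟨u, by omega⟩
  | succ j ih =>
    obtain rfl | hij := eq_or_lt_of_le hij
    · exact ⟨u, h⟩
    obtain ⟨x, -, hx⟩ := exists_adj_dist_eq_of_dist_eq_succ h
    exact ih hx (by omega)

theorem distGraph_adj_iff {i : ℕ} (hi : i ≠ 0) {u v : V} :
    (G.distGraph i).Adj u v ↔ G.dist u v = i :=
  ⟨And.right, fun h => ⟨by rintro rfl; simp_all, h⟩⟩

theorem Colorable.even_dist_add_dist_add_dist (hbip : G.Colorable 2) (hconn : G.Connected)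
    (u v w : V) : Even (G.dist u v + G.dist v w + G.dist w u) := by
  obtain ⟨p, hp⟩ := hconn.exists_walk_length_eq_dist u v
  obtain ⟨q, hq⟩ := hconn.exists_walk_length_eq_dist v w
  obtain ⟨r, hr⟩ := hconn.exists_walk_length_eq_dist w u
  simpa [hp, hq, hr] using two_colorable_iff_forall_loop_even.mp hbip u ((p.append q).append r)

theorem Colorable.dist_ne_of_adj (hbip : G.Colorable 2) (hconn : G.Connected) {v w : V}
    (hvw : G.Adj v w) (u : V) : G.dist u v ≠ G.dist u w := by
  have := hbip.even_dist_add_dist_add_dist hconn u v w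
  rw [dist_eq_one_iff_adj.mpr hvw, dist_comm (u := w)] at this
  intro h
  rw [h] at this
  grind

section StronglyRegular

variable [Fintype V] [DecidableRel G.Adj] {n k ℓ : ℕ}

theorem IsSRGWith.adj_of_adj_of_adj (h : G.IsSRGWith n k ℓ 0) {u v w : V} (huv : G.Adj u v)
    (huw : G.Adj u w) (hvw : v ≠ w) : G.Adj v w := by
  by_contra hnadj
  have := h.of_not_adj hvw hnadj
  rw [Fintype.card_eq_zero_iff] at this
  exact this.false ⟨u, huv.symm, huw.symm⟩

theorem IsRegularOfDegree.isSRGWith_of_adj_of_adj (hreg : G.IsRegularOfDegree k)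
    (htrans : ∀ u v w, G.Adj u v → G.Adj u w → v ≠ w → G.Adj v w) :
    G.IsSRGWith (Fintype.card V) k (k - 1) 0 where
  card := rfl
  regular := hreg
  of_adj v w hvw := by
    have : G.commonNeighbors v w = G.neighborSet v \ {w} := by
      ext u
      simp only [mem_commonNeighbors, Set.mem_sdiff, mem_neighborSet, Set.mem_singleton_iff]
      exact ⟨fun h => ⟨h.1, (h.2.ne ·.symm)⟩,
        fun h => ⟨h.1, htrans v w u hvw h.1 (h.2 ·.symm)⟩⟩
    simp_rw [this, ← Set.toFinset_card, Set.toFinset_sdiff, Set.toFinset_singleton]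
    rw [Finset.card_sdiff_of_subset (by simpa using hvw), ← hreg v]
    rfl
  of_not_adj v w hvw hnadj := by
    rw [Fintype.card_eq_zero_iff]
    exact ⟨fun ⟨u, huv, huw⟩ => hnadj (htrans u v w huv.symm huw.symm hvw)⟩

end StronglyRegular

namespace IsDistRegular

variable [Fintype V] {d k : ℕ} {c a b : ℕ → ℕ}

theorem card_filter_neighborFinset (hG : G.IsDistRegular d c a b) {u v : V} {j : ℕ}
    (hj : G.dist u v = j) (hjd : j ≤ d) (i : ℕ) :
    #{w ∈ G.neighborFinset v | G.dist u w = i} =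
      if i + 1 = j then c j else if i = j then a j else if i = j + 1 then b j else 0 := by
  obtain ⟨hc, ha, hb⟩ := hG j hjd u v hj
  split_ifs with h₁ h₂ h₃
  · rwa [show i = j - 1 by omega]
  · rwa [h₂]
  · rwa [h₃]
  · rw [Finset.card_eq_zero, Finset.filter_eq_empty_iff]
    intro w hw
    have := (mem_neighborFinset _ _ _).mp hw |>.diff_dist_adj (u := u)
    omega

theorem c_add_a_add_b (hG : G.IsDistRegular d c a b) (hreg : G.IsRegularOfDegree k) {u v : V}
    {i : ℕ} (h : G.dist u v = i) (hi : 1 ≤ i) (hid : i ≤ d) : c i + a i + b i = k := by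
  obtain ⟨hc, ha, hb⟩ := hG i hid u v h
  rw [← hreg v, degree, Finset.card_eq_sum_card_fiberwise (f := fun w => G.dist u w)
    (t := {i - 1, i, i + 1})]
  · rw [Finset.sum_insert (by simp; omega), Finset.sum_insert (by simp), Finset.sum_singleton,
      hc, ha, hb, add_assoc]
  · intro w hw
    rw [Finset.mem_coe, mem_neighborFinset] at hw
    have := hw.diff_dist_adj (u := u)
    simp only [Finset.coe_insert, Finset.coe_singleton, Set.mem_insert_iff,
      Set.mem_singleton_iff]
    omega

theorem b_zero (hG : G.IsDistRegular d c a b) (hreg : G.IsRegularOfDegree k) (u : V) :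
    b 0 = k := by
  rw [← (hG 0 (Nat.zero_le d) u u (by simp)).2.2, ← hreg u, degree, zero_add]
  congr 1
  ext w
  simp

theorem one_le_c (hG : G.IsDistRegular d c a b) {u v : V} {i : ℕ} (h : G.dist u v = i + 1)
    (hid : i + 1 ≤ d) : 1 ≤ c (i + 1) := by
  obtain ⟨x, hvx, hxu⟩ := exists_adj_dist_eq_of_dist_eq_succ (dist_comm.trans h)
  rw [← (hG _ hid u v h).1, Nat.one_le_iff_ne_zero, ← Nat.pos_iff_ne_zero, Finset.card_pos]
  exact ⟨x, by simpa [dist_comm, hvx] using hxu⟩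

theorem one_le_b (hG : G.IsDistRegular d c a b) {u v : V} {i : ℕ} (h : G.dist u v = i + 1)
    (hid : i ≤ d) : 1 ≤ b i := by
  obtain ⟨x, hvx, hxu⟩ := exists_adj_dist_eq_of_dist_eq_succ (dist_comm.trans h)
  rw [← (hG _ hid u x (dist_comm.trans hxu)).2.2, Nat.one_le_iff_ne_zero, ← Nat.pos_iff_ne_zero,
    Finset.card_pos]
  exact ⟨v, by simpa [hvx.symm] using h⟩

theorem one_lt_of_dist_eq_two (hG : G.IsDistRegular d c a b)
    (hreg : G.IsRegularOfDegree k) {u v : V} (h : G.dist u v = 2) (hd : 2 ≤ d) : 1 < k := by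
  obtain ⟨x, -, hx⟩ := exists_adj_dist_eq_of_dist_eq_succ h
  have := hG.c_add_a_add_b hreg hx le_rfl (by omega)
  have : 1 ≤ c 1 := hG.one_le_c hx (by omega)
  have := hG.one_le_b h (by omega)
  omega

theorem card_sphere_succ_mul (hG : G.IsDistRegular d c a b) (u : V) {i : ℕ} (hid : i < d) :
    #{y | G.dist u y = i + 1} * c (i + 1) = #{x | G.dist u x = i} * b i := by
  refine Finset.card_mul_eq_card_mul G.Adj (fun y hy => ?_) (fun x hx => ?_)
  · rw [Finset.mem_filter] at hy
    rw [← (hG _ hid u y hy.2).1, Finset.bipartiteAbove]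
    congr 1
    ext x
    simp [mem_neighborFinset, and_comm]
  · rw [Finset.mem_filter] at hx
    rw [← (hG _ hid.le u x hx.2).2.2, Finset.bipartiteBelow]
    congr 1
    ext y
    simp [mem_neighborFinset, and_comm, adj_comm]

theorem card_sphere_eq (hG : G.IsDistRegular d c a b) (hconn : G.Connected) {u₀ v₀ : V}
    (hd : G.dist u₀ v₀ = d) {i : ℕ} (hid : i ≤ d) (u u' : V) :
    #{y | G.dist u y = i} = #{y | G.dist u' y = i} := by
  induction i with
  | zero => simp [hconn.dist_eq_zero_iff, Finset.filter_eq]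
  | succ i ih =>
    obtain ⟨x, hx⟩ := exists_dist_eq_of_le hd hid
    refine Nat.eq_of_mul_eq_mul_right (hG.one_le_c hx hid) ?_
    rw [hG.card_sphere_succ_mul u hid, hG.card_sphere_succ_mul u' hid, ih (by omega)]

theorem isRegularOfDegree_distGraph (hG : G.IsDistRegular d c a b) (hconn : G.Connected)
    {u₀ v₀ : V} (hd : G.dist u₀ v₀ = d) {i : ℕ} (hi : i ≠ 0) (hid : i ≤ d) :
    (G.distGraph i).IsRegularOfDegree #{y | G.dist u₀ y = i} := by
  intro u
  rw [← hG.card_sphere_eq hconn hd hid u, degree]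
  congr 1
  ext y
  simp [distGraph_adj_iff hi]

theorem a_eq_zero (hG : G.IsDistRegular d c a b) (hconn : G.Connected) (hbip : G.Colorable 2)
    {u v : V} {i : ℕ} (h : G.dist u v = i) (hid : i ≤ d) : a i = 0 := by
  rw [← (hG i hid u v h).2.1, Finset.card_eq_zero, Finset.filter_eq_empty_iff]
  intro w hw hw'
  exact hbip.dist_ne_of_adj hconn ((mem_neighborFinset _ _ _).mp hw) u (h.trans hw'.symm)

theorem c_eq_of_colorable (hG : G.IsDistRegular d c a b) (hconn : G.Connected)
    (hbip : G.Colorable 2) (hreg : G.IsRegularOfDegree k) (hdiam : ∀ u v : V, G.dist u v ≤ d)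
    {u v : V} (h : G.dist u v = d) (hd : 1 ≤ d) : c d = k := by
  have hb : b d = 0 := by
    rw [← (hG d le_rfl u v h).2.2, Finset.card_eq_zero, Finset.filter_eq_empty_iff]
    exact fun w _ hw => by have := hdiam u w; omega
  simpa [hG.a_eq_zero hconn hbip h le_rfl, hb] using hG.c_add_a_add_b hreg h hd le_rfl

theorem isStronglyDRG_iff (hG : G.IsDistRegular d c a b) (hconn : G.Connected)
    (hbip : G.Colorable 2) {u₀ v₀ : V} (hd : G.dist u₀ v₀ = d) (hd2 : 2 ≤ d) :
    G.IsStronglyDRG d ↔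
      ∀ u v w : V, G.dist u v = d → G.dist u w = d → v ≠ w → G.dist v w = d := by
  have hd0 : d ≠ 0 := by omega
  simp_rw [← distGraph_adj_iff hd0]
  constructor
  · rintro ⟨n, k', ℓ, μ, hsrg⟩
    obtain ⟨x, hux, -⟩ :=
      exists_adj_dist_eq_of_dist_eq_succ (show G.dist u₀ v₀ = d - 1 + 1 by omega)
    have hnadj : ¬(G.distGraph d).Adj u₀ x := by
      rw [distGraph_adj_iff hd0, dist_eq_one_iff_adj.mpr hux]
      omega
    -- By parity, the adjacent vertices `u₀` and `x` have no common neighbour in `G.distGraph d`.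
    have hμ : μ = 0 := by
      rw [← hsrg.of_not_adj hux.ne hnadj, Fintype.card_eq_zero_iff]
      refine ⟨fun ⟨y, hy, hy'⟩ => hbip.dist_ne_of_adj hconn hux y ?_⟩
      rw [mem_neighborSet, distGraph_adj_iff hd0] at hy hy'
      rw [dist_comm, hy, dist_comm, hy']
    subst hμ
    exact fun u v w => hsrg.adj_of_adj_of_adj
  · exact fun htrans => ⟨_, _, _, _,
      (hG.isRegularOfDegree_distGraph hconn hd hd0 le_rfl).isSRGWith_of_adj_of_adj htrans⟩

theorem b_eq_one_of_forall_dist_eq {i : ℕ} (hG : G.IsDistRegular (i + 1) c a b)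
    (hconn : G.Connected) (hi : 2 ≤ i) {u₀ v₀ : V} (hd : G.dist u₀ v₀ = i + 1)
    (htrans : ∀ u v w : V, G.dist u v = i + 1 → G.dist u w = i + 1 → v ≠ w →
      G.dist v w = i + 1) :
    b i = 1 := by
  obtain ⟨x, hx⟩ := exists_dist_eq_of_le hd (Nat.le_succ i)
  refine le_antisymm ?_ (hG.one_le_b hd (Nat.le_succ i))
  rw [← (hG i (Nat.le_succ i) v₀ x (dist_comm.trans hx)).2.2, Finset.card_le_one]
  intro y hy y' hy'
  simp only [Finset.mem_filter, mem_neighborFinset] at hy hy'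
  by_contra hne
  have := htrans v₀ y y' hy.2 hy'.2 hne
  have := hconn.dist_triangle (u := y) (v := x) (w := y')
  rw [dist_eq_one_iff_adj.mpr hy.1.symm, dist_eq_one_iff_adj.mpr hy'.1] at this
  omega

theorem dist_eq_four_of_b_three_eq_one (hG : G.IsDistRegular 4 c a b) (hconn : G.Connected)
    (hbip : G.Colorable 2) (hdiam : ∀ u v : V, G.dist u v ≤ 4) (hb : b 3 = 1) {u v w : V}
    (huv : G.dist u v = 4) (huw : G.dist u w = 4) (hvw : v ≠ w) : G.dist v w = 4 := by
  have hpar := hbip.even_dist_add_dist_add_dist hconn u v w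
  rw [huv, dist_comm (u := w) (v := u), huw] at hpar
  have hpos := hconn.pos_dist_of_ne hvw
  have : G.dist v w ≠ 2 := by
    intro h2
    obtain ⟨x, hvx, hxw⟩ := exists_adj_dist_eq_of_dist_eq_succ h2
    have hux : G.dist u x = 3 := by
      have := hvx.diff_dist_adj (u := u)
      have := hbip.dist_ne_of_adj hconn hvx u
      have := hdiam u x
      omega
    have hcard := (hG 3 (by norm_num) u x hux).2.2
    rw [hb, Finset.card_eq_one] at hcard
    obtain ⟨y, hy⟩ := hcard
    have hv : v ∈ ({y} : Finset V) := hy ▸ by simp [hvx.symm, huv]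
    have hw : w ∈ ({y} : Finset V) := hy ▸ by simp [dist_eq_one_iff_adj.mp hxw, huw]
    simp only [Finset.mem_singleton] at hv hw
    exact hvw (hv.trans hw.symm)
  have := hdiam v w
  grind

theorem forall_dist_eq_four_iff (hG : G.IsDistRegular 4 c a b) (hconn : G.Connected)
    (hbip : G.Colorable 2) (hdiam : ∀ u v : V, G.dist u v ≤ 4) {u₀ v₀ : V}
    (hd : G.dist u₀ v₀ = 4) :
    (∀ u v w : V, G.dist u v = 4 → G.dist u w = 4 → v ≠ w → G.dist v w = 4) ↔ b 3 = 1 :=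
  ⟨hG.b_eq_one_of_forall_dist_eq hconn (by norm_num) hd,
    fun hb _ _ _ => hG.dist_eq_four_of_b_three_eq_one hconn hbip hdiam hb⟩

end IsDistRegular

variable (R : Type*)

noncomputable def distMatrix [Zero R] [One R] (G : SimpleGraph V) (i : ℕ) : Matrix V V R :=
  Matrix.of fun u v => if G.dist u v = i then 1 else 0

variable {R}

@[simp]
theorem distMatrix_apply [Zero R] [One R] (i : ℕ) (u v : V) :
    G.distMatrix R i u v = if G.dist u v = i then 1 else 0 := rfl

theorem distMatrix_zero [DecidableEq V] [Zero R] [One R] (hconn : G.Connected) :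
    G.distMatrix R 0 = 1 := by
  ext u v
  simp [Matrix.one_apply, hconn.dist_eq_zero_iff]

theorem distMatrix_one [Zero R] [One R] : G.distMatrix R 1 = G.adjMatrix R := by
  ext u v
  simp

theorem distMatrix_eq_zero_of_lt [Zero R] [One R] {d i : ℕ}
    (hdiam : ∀ u v : V, G.dist u v ≤ d) (hi : d < i) : G.distMatrix R i = 0 := by
  ext u v
  simp [show G.dist u v ≠ i by have := hdiam u v; omega]

theorem Colorable.hasEigenvalue_adjEnd_neg [Fintype V] [DecidableEq V] (hbip : G.Colorable 2)
    {μ : ℝ} (hμ : G.adjEnd.HasEigenvalue μ) : G.adjEnd.HasEigenvalue (-μ) := by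
  obtain ⟨C⟩ := hbip
  obtain ⟨x, hx⟩ := hμ.exists_hasEigenvector
  set s : V → ℝ := fun v => if C v = 0 then 1 else -1
  have hs_sq : ∀ v, s v * s v = 1 := fun v => by by_cases h : C v = 0 <;> simp [s, h]
  have hs_adj : ∀ {v w}, G.Adj v w → s w = -s v := fun {v w} hvw => by
    have := C.valid hvw
    revert this
    simp only [s]
    generalize C v = i
    generalize C w = j
    fin_cases i <;> fin_cases j <;> simp
  refine Module.End.hasEigenvalue_of_hasEigenvector (x := s * x) ⟨?_, fun h => hx.2 ?_⟩
  · rw [Module.End.mem_eigenspace_iff]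
    ext v
    have hxv := congr_fun hx.apply_eq_smul v
    simp only [SimpleGraph.adjEnd, Matrix.toLin'_apply, adjMatrix_mulVec_apply, Pi.mul_apply,
      Pi.smul_apply, smul_eq_mul] at hxv ⊢
    rw [Finset.sum_congr rfl fun w hw => by rw [hs_adj ((mem_neighborFinset _ _ _).mp hw)],
      ← Finset.mul_sum, hxv]
    ring
  · ext v
    simpa [hs_sq, ← mul_assoc] using congr_arg (s v * ·) (congr_fun h v)

theorem Colorable.pos_one_of_hasSpectrum [Fintype V] [DecidableEq V] (hbip : G.Colorable 2)
    {n : ℕ} {lam : Fin (n + 3 + 1) → ℝ} {m : Fin (n + 3 + 1) → ℕ} (hspec : G.HasSpectrum lam m) :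
    0 < lam 1 :=
  hspec.1.pos_one_of_forall_exists_neg fun i =>
    (hspec.2.2.1 _ (hbip.hasEigenvalue_adjEnd_neg (hspec.2.1 i))).imp fun _ h => h.symm

namespace IsDistRegular

variable [Fintype V] {d k : ℕ} {c a b : ℕ → ℕ}

theorem adjMatrix_mul_distMatrix [NonAssocSemiring R] (hG : G.IsDistRegular d c a b)
    (hdiam : ∀ u v : V, G.dist u v ≤ d) {i : ℕ} (hi : 1 ≤ i) :
    G.adjMatrix R * G.distMatrix R i =
      b (i - 1) • G.distMatrix R (i - 1) + a i • G.distMatrix R i +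
        c (i + 1) • G.distMatrix R (i + 1) := by
  ext u v
  have hcount := hG.card_filter_neighborFinset (dist_comm (u := v) (v := u)) (hdiam u v) i
  simp only [adjMatrix_mul_apply, Matrix.add_apply, Matrix.smul_apply, distMatrix_apply,
    smul_ite, nsmul_one, smul_zero, Finset.sum_boole]
  have hsymm : #{w ∈ G.neighborFinset u | G.dist w v = i} =
      #{w ∈ G.neighborFinset u | G.dist v w = i} := by
    simp only [dist_comm]
  rw [hsymm, hcount]
  split_ifs <;> first | omega | simp only [zero_add, add_zero, Nat.cast_zero] <;> congr 2

theorem adjMatrix_pow_five_add [DecidableEq V] [Semiring R] (hG : G.IsDistRegular 4 c a b)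
    (hconn : G.Connected) (hbip : G.Colorable 2) (hreg : G.IsRegularOfDegree k)
    (hdiam : ∀ u v : V, G.dist u v ≤ 4) {u₀ v₀ : V} (hd : G.dist u₀ v₀ = 4) :
    G.adjMatrix R ^ 5 + (b 2 * c 3 * k + b 3 * k * (k + b 1 * c 2)) • G.adjMatrix R =
      (k + b 1 * c 2 + b 2 * c 3 + b 3 * k) • G.adjMatrix R ^ 3 := by
  have ha : ∀ i ≤ 4, a i = 0 := fun i hi => by
    obtain ⟨x, hx⟩ := exists_dist_eq_of_le hd hi
    exact hG.a_eq_zero hconn hbip hx hi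
  have hrec := fun i (hi : 1 ≤ i) => hG.adjMatrix_mul_distMatrix (R := R) hdiam hi
  have h₁ := hrec 1 le_rfl
  have h₂ := hrec 2 (by norm_num)
  have h₃ := hrec 3 (by norm_num)
  have h₄ := hrec 4 (by norm_num)
  simp only [Nat.add_one_sub_one, distMatrix_one, distMatrix_zero hconn, hG.b_zero hreg u₀,
    hG.c_eq_of_colorable hconn hbip hreg hdiam hd (by norm_num),
    distMatrix_eq_zero_of_lt hdiam (show 4 < 4 + 1 by norm_num), ha 1 (by norm_num),
    ha 2 (by norm_num), ha 3 (by norm_num), ha 4 (by norm_num), zero_smul, smul_zero, add_zero]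
    at h₁ h₂ h₃ h₄
  exact pow_five_add_nsmul_eq_nsmul_pow_three h₁ h₂ h₃ h₄

theorem b_three_eq_one_iff [DecidableEq V] (hG : G.IsDistRegular 4 c a b) (hconn : G.Connected)
    (hbip : G.Colorable 2) (hreg : G.IsRegularOfDegree k) (hdiam : ∀ u v : V, G.dist u v ≤ 4)
    {u₀ v₀ : V} (hd : G.dist u₀ v₀ = 4) (hk : G.adjEnd.HasEigenvalue k) {μ : ℝ}
    (hμ : G.adjEnd.HasEigenvalue μ) (hpos : 0 < μ) (hlt : μ < k) :
    b 3 = 1 ↔ μ ^ 2 = k := by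
  have hpoly := congrArg Matrix.toLinAlgEquiv'
    (hG.adjMatrix_pow_five_add (R := ℝ) hconn hbip hreg hdiam hd)
  simp only [map_add, map_pow, map_nsmul] at hpoly
  obtain ⟨hα, hβ⟩ := eq_sq_add_sq_and_eq_sq_mul_sq hpos hlt
    (hk.pow_five_add_mul_eq_mul_pow_three hpoly) (hμ.pow_five_add_mul_eq_mul_pow_three hpoly)
  push_cast at hα hβ
  obtain ⟨x, hx⟩ := exists_dist_eq_of_le hd (show 2 ≤ 4 by norm_num)
  have hbc : (1 : ℝ) ≤ b 1 * c 2 :=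
    one_le_mul_of_one_le_of_one_le (by exact_mod_cast hG.one_le_b hx (by norm_num))
      (by exact_mod_cast hG.one_le_c hx (by norm_num))
  have hk1 : (1 : ℝ) < k := by exact_mod_cast hG.one_lt_of_dist_eq_two hreg hx (by norm_num)
  have key : (b 1 * c 2 : ℝ) * (1 - b 3) = (k - 1) * (k - μ ^ 2) :=
    mul_left_cancel₀ (show (k : ℝ) ≠ 0 by positivity) (by linear_combination k * hα - hβ)
  constructor
  · intro hb
    rw [hb, Nat.cast_one, sub_self, mul_zero, eq_comm, mul_eq_zero, sub_eq_zero, sub_eq_zero] at key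
    exact (key.resolve_left hk1.ne').symm
  · intro hsq
    rw [hsq, sub_self, mul_zero, mul_eq_zero, sub_eq_zero] at key
    exact_mod_cast (key.resolve_left (by positivity)).symm

end IsDistRegular

end SimpleGraph

theorem stmt_6_general {V : Type*} [Fintype V] [DecidableEq V] (G : SimpleGraph V)
    (k : ℕ) (c a b : ℕ → ℕ) (lam : Fin 5 → ℝ) (m : Fin 5 → ℕ)
    (hconn : G.Connected)
    (hreg : G.IsRegularOfDegree k)
    (hdiam : ∀ u v : V, G.dist u v ≤ 4) (hdiam' : ∃ u v : V, G.dist u v = 4)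
    (hdrg : G.IsDistRegular 4 c a b)
    (hspec : G.HasSpectrum lam m)
    (hlam0 : lam 0 = (k : ℝ))
    (hbip : G.Colorable 2) :
    G.IsStronglyDRG 4 ↔ lam 1 = Real.sqrt k := by
  obtain ⟨u₀, v₀, hd⟩ := hdiam'
  have hpos : 0 < lam 1 := hbip.pos_one_of_hasSpectrum hspec
  have hlt : lam 1 < k := hlam0 ▸ hspec.1 (show (0 : Fin 5) < 1 by decide)
  rw [hdrg.isStronglyDRG_iff hconn hbip hd (by norm_num),
    hdrg.forall_dist_eq_four_iff hconn hbip hdiam hd,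
    hdrg.b_three_eq_one_iff hconn hbip hreg hdiam hd (hlam0 ▸ hspec.2.1 0) (hspec.2.1 1) hpos hlt,
    @eq_comm _ (lam 1), Real.sqrt_eq_iff_eq_sq (Nat.cast_nonneg k) hpos.le, eq_comm]

theorem stmt_6 {V : Type*} [Fintype V] [DecidableEq V] (G : SimpleGraph V)
    (n k : ℕ) (c a b : ℕ → ℕ) (lam : Fin 5 → ℝ) (m : Fin 5 → ℕ)
    (hn : Fintype.card V = n)
    (hconn : G.Connected)
    (hreg : G.IsRegularOfDegree k)
    (hdiam : ∀ u v : V, G.dist u v ≤ 4) (hdiam' : ∃ u v : V, G.dist u v = 4)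
    (hdrg : G.IsDistRegular 4 c a b)
    (hspec : G.HasSpectrum lam m)
    (hlam0 : lam 0 = (k : ℝ)) (hm0 : m 0 = 1)
    (hbip : G.Colorable 2) :
    G.IsStronglyDRG 4 ↔ lam 1 = Real.sqrt k :=
  stmt_6_general G k c a b lam m hconn hreg hdiam hdiam' hdrg hspec hlam0 hbip
end

section
/- One has m0·π0 = m4·π4 if and only if k·(λ1 + λ2 + λ3) + λ1·λ2·λ3 = k·a1. -/
open Finset

attribute [local instance] Classical.propDecidable

/-! The spectral moments `∑ mᵢ λᵢ^p = tr A^p` are `n, 0, nk, nka₁` for `p = 0, 1, 2, 3`, counting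
closed walks in a `k`-regular graph whose edges each lie in `a₁` triangles. Integrating the cubic
`q(x) = (x - λ₁)(x - λ₂)(x - λ₃)`, which vanishes at the three middle eigenvalues, against the
spectral measure gives `m₀ q(λ₀) + m₄ q(λ₄) = n (k a₁ - k (λ₁ + λ₂ + λ₃) - λ₁λ₂λ₃)`, while
`m₀π₀ - m₄π₄ = (λ₀ - λ₄) (m₀ q(λ₀) + m₄ q(λ₄))`. -/

open Module Module.End

namespace LinearMap.IsSymmetric

variable {𝕜 E : Type*} [RCLike 𝕜] [NormedAddCommGroup E] [InnerProductSpace 𝕜 E]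
  [FiniteDimensional 𝕜 E] {T : E →ₗ[𝕜] E}

theorem trace_pow_eq_sum_eigenvalues_pow (hT : T.IsSymmetric) {n : ℕ} (hn : finrank 𝕜 E = n)
    (p : ℕ) : trace 𝕜 E (T ^ p) = ∑ i, (hT.eigenvalues hn i : 𝕜) ^ p := by
  rw [trace_eq_sum_inner _ (hT.eigenvectorBasis hn)]
  refine Finset.sum_congr rfl fun i _ => ?_
  rw [(hT.hasEigenvector_eigenvectorBasis hn i).pow_apply, inner_smul_right,
    inner_self_eq_one_of_norm_eq_one ((hT.eigenvectorBasis hn).orthonormal.1 i), mul_one]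

theorem trace_pow_eq_sum_finrank_eigenspace_mul (hT : T.IsSymmetric) {s : Finset ℝ}
    (hs : ∀ μ : ℝ, HasEigenvalue T μ → μ ∈ s) (p : ℕ) :
    trace 𝕜 E (T ^ p) = ∑ μ ∈ s, (finrank 𝕜 (eigenspace T μ) : 𝕜) * (μ : 𝕜) ^ p := by
  rw [hT.trace_pow_eq_sum_eigenvalues_pow rfl, ← Finset.sum_fiberwise_of_maps_to
    (g := hT.eigenvalues rfl) (t := s) fun i _ => hs _ (hT.hasEigenvalue_eigenvalues rfl i)]
  refine Finset.sum_congr rfl fun μ _ => ?_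
  rw [Finset.sum_congr rfl fun i hi => by rw [(Finset.mem_filter.mp hi).2], Finset.sum_const,
    nsmul_eq_mul, ← hT.card_filter_eigenvalues_eq rfl]
  simp only [RCLike.ofReal_inj]

end LinearMap.IsSymmetric

namespace Matrix

variable {n R : Type*} [Fintype n] [DecidableEq n] [CommRing R]

theorem trace_toLpLin (p : ENNReal) (A : Matrix n n R) :
    LinearMap.trace R _ (toLpLin p p A) = A.trace := by
  rw [toLpLin_eq_toLin, LinearMap.trace_eq_matrix_trace R (PiLp.basisFun p R n),
    LinearMap.toMatrix_toLin]

theorem eigenspace_toLpLin (p : ENNReal) (A : Matrix n n R) (μ : R) :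
    eigenspace (toLpLin p p A) μ =
      (eigenspace (toLin' A) μ).map (WithLp.linearEquiv p R (n → R)).symm.toLinearMap := by
  ext x
  rw [Submodule.map_equiv_eq_comap_symm, LinearEquiv.symm_symm, Submodule.mem_comap,
    mem_eigenspace_iff, mem_eigenspace_iff, ← (WithLp.ofLp_injective p).eq_iff, ofLp_toLpLin,
    WithLp.ofLp_smul]
  rfl

theorem IsHermitian.trace_pow_eq_sum_finrank_eigenspace_mul {𝕜 : Type*} [RCLike 𝕜]
    {A : Matrix n n 𝕜} (hA : A.IsHermitian) {s : Finset ℝ}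
    (hs : ∀ μ : ℝ, HasEigenvalue (toLin' A) μ → μ ∈ s) (p : ℕ) :
    (A ^ p).trace = ∑ μ ∈ s, (finrank 𝕜 (eigenspace (toLin' A) μ) : 𝕜) * (μ : 𝕜) ^ p := by
  have hT := isSymmetric_toEuclideanLin_iff.mpr hA
  have hs' : ∀ μ : ℝ, HasEigenvalue (toEuclideanLin A) μ → μ ∈ s := fun μ hμ =>
    hs μ <| hasEigenvalue_iff.mpr fun h =>
      hasEigenvalue_iff.mp hμ (by rw [eigenspace_toLpLin 2, h, Submodule.map_bot])
  rw [← trace_toLpLin 2, toLpLin_pow, hT.trace_pow_eq_sum_finrank_eigenspace_mul hs']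
  exact Finset.sum_congr rfl fun μ _ => by rw [eigenspace_toLpLin 2, LinearEquiv.finrank_map_eq]

end Matrix

namespace SimpleGraph

section Traces

variable {V R : Type*} [Fintype V] [DecidableEq V] [Semiring R] {G : SimpleGraph V}
  [DecidableRel G.Adj] {k ℓ : ℕ}

theorem adjMatrix_mul_self_apply (u v : V) :
    (G.adjMatrix R * G.adjMatrix R) u v = #(G.neighborFinset u ∩ G.neighborFinset v) := by
  rw [adjMatrix_mul_apply]
  simp only [adjMatrix_apply]
  rw [Finset.sum_boole]
  congr 2
  ext w
  simp [G.adj_comm w v]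

theorem IsRegularOfDegree.trace_adjMatrix_sq (hreg : G.IsRegularOfDegree k) :
    (G.adjMatrix R ^ 2).trace = Fintype.card V * k := by
  have hdiag : ∀ v, (G.adjMatrix R ^ 2) v v = k := fun v => by
    rw [sq, adjMatrix_mul_self_apply_self, hreg v]
  simp [Matrix.trace, hdiag]

theorem IsRegularOfDegree.trace_adjMatrix_pow_three (hreg : G.IsRegularOfDegree k)
    (hℓ : ∀ u v, G.Adj u v → #(G.neighborFinset u ∩ G.neighborFinset v) = ℓ) :
    (G.adjMatrix R ^ 3).trace = Fintype.card V * k * ℓ := by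
  have hdiag : ∀ v, (G.adjMatrix R ^ 3) v v = k * ℓ := fun v => by
    rw [pow_succ', pow_two, adjMatrix_mul_apply,
      Finset.sum_congr rfl fun u hu => by
        rw [adjMatrix_mul_self_apply, hℓ u v ((mem_neighborFinset G v u).mp hu).symm],
      Finset.sum_const, card_neighborFinset_eq_degree, hreg v, nsmul_eq_mul]
  simp [Matrix.trace, hdiag, mul_assoc]

end Traces

variable {V : Type*} [Fintype V] [DecidableEq V] {G : SimpleGraph V}

theorem IsDistRegular.card_neighborFinset_inter_of_adj {d : ℕ} {c a b : ℕ → ℕ}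
    (h : G.IsDistRegular d c a b) (hd : 1 ≤ d) {u v : V} (huv : G.Adj u v) :
    #(G.neighborFinset u ∩ G.neighborFinset v) = a 1 := by
  rw [← (h 1 hd u v (dist_eq_one_iff_adj.mpr huv)).2.1, Finset.inter_comm]
  congr 1
  ext w
  simp [dist_eq_one_iff_adj]

theorem HasSpectrum.sum_mul_pow_eq_trace {d : ℕ} {lam : Fin (d + 1) → ℝ} {m : Fin (d + 1) → ℕ}
    (h : G.HasSpectrum lam m) (p : ℕ) :
    ∑ i, (m i : ℝ) * lam i ^ p = (G.adjMatrix ℝ ^ p).trace := by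
  obtain ⟨hanti, -, hall, hm⟩ := h
  rw [(G.isHermitian_adjMatrix ℝ).trace_pow_eq_sum_finrank_eigenspace_mul (s := Finset.univ.image lam) fun μ hμ => by
      obtain ⟨i, rfl⟩ := hall μ hμ
      exact Finset.mem_image_of_mem lam (Finset.mem_univ i),
    Finset.sum_image fun i _ j _ hij => hanti.injective hij]
  simp only [hm, RCLike.ofReal_real_eq_id, id]
  rfl

end SimpleGraph

theorem Fin.prod_univ_erase {M : Type*} [CommMonoid M] {n : ℕ} (i : Fin (n + 1))
    (f : Fin (n + 1) → M) : ∏ j ∈ univ.erase i, f j = ∏ j : Fin n, f (i.succAbove j) := by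
  rw [Fin.univ_succAbove n i, Finset.erase_cons, Finset.prod_map]
  rfl

theorem StrictAnti.mul_prod_abs_sub_eq_iff {lam m : Fin 5 → ℝ} (h : StrictAnti lam) :
    m 0 * ∏ j ∈ univ.erase 0, |lam 0 - lam j| = m 4 * ∏ j ∈ univ.erase 4, |lam 4 - lam j| ↔
      ∑ i, m i * ((lam i - lam 1) * (lam i - lam 2) * (lam i - lam 3)) = 0 := by
  have hπ₀ : ∏ j ∈ univ.erase 0, |lam 0 - lam j| =
      (lam 0 - lam 1) * (lam 0 - lam 2) * (lam 0 - lam 3) * (lam 0 - lam 4) := by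
    rw [Fin.prod_univ_erase, Fin.prod_univ_four]
    simp [abs_of_pos, h.lt_iff_gt]
  have hπ₄ : ∏ j ∈ univ.erase 4, |lam 4 - lam j| =
      (lam 0 - lam 4) * (lam 1 - lam 4) * (lam 2 - lam 4) * (lam 3 - lam 4) := by
    rw [show (4 : Fin 5) = Fin.last 4 from rfl, Fin.prod_univ_erase, Fin.prod_univ_four]
    simp only [Fin.succAbove_last]
    simp [abs_of_neg, h.lt_iff_gt]
  have key : m 0 * ∏ j ∈ univ.erase 0, |lam 0 - lam j| - m 4 * ∏ j ∈ univ.erase 4, |lam 4 - lam j| =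
      (lam 0 - lam 4) * ∑ i, m i * ((lam i - lam 1) * (lam i - lam 2) * (lam i - lam 3)) := by
    rw [hπ₀, hπ₄, Fin.sum_univ_five]
    ring
  rw [← sub_eq_zero, key, mul_eq_zero, or_iff_right (sub_ne_zero.mpr (h (by decide)).ne')]

theorem stmt_13_general {V : Type*} [Fintype V] [DecidableEq V] (G : SimpleGraph V)
    (k : ℕ) (c a b : ℕ → ℕ) (lam : Fin 5 → ℝ) (m : Fin 5 → ℕ)
    (hreg : G.IsRegularOfDegree k)
    (hdiam' : ∃ u v : V, G.dist u v = 4)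
    (hdrg : G.IsDistRegular 4 c a b)
    (hspec : G.HasSpectrum lam m)
    (pi : Fin 5 → ℝ) (hpi : ∀ i, pi i = ∏ j ∈ Finset.univ.erase i, |lam i - lam j|) :
    (m 0 : ℝ) * pi 0 = (m 4 : ℝ) * pi 4 ↔
      (k : ℝ) * (lam 1 + lam 2 + lam 3) + lam 1 * lam 2 * lam 3 = (k : ℝ) * a 1 := by
  obtain ⟨u, -, -⟩ := hdiam'
  have hN : (Fintype.card V : ℝ) ≠ 0 := Nat.cast_ne_zero.mpr (Fintype.card_pos_iff.mpr ⟨u⟩).ne'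
  have h₀ := hspec.sum_mul_pow_eq_trace 0
  have h₁ := hspec.sum_mul_pow_eq_trace 1
  have h₂ := hspec.sum_mul_pow_eq_trace 2
  have h₃ := hspec.sum_mul_pow_eq_trace 3
  rw [pow_zero, Matrix.trace_one] at h₀
  rw [pow_one, SimpleGraph.trace_adjMatrix] at h₁
  rw [hreg.trace_adjMatrix_sq] at h₂
  rw [hreg.trace_adjMatrix_pow_three fun _ _ =>
    hdrg.card_neighborFinset_inter_of_adj (by norm_num)] at h₃
  have hcubic : ∑ i, (m i : ℝ) * ((lam i - lam 1) * (lam i - lam 2) * (lam i - lam 3)) =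
      Fintype.card V * (k * a 1 - (k * (lam 1 + lam 2 + lam 3) + lam 1 * lam 2 * lam 3)) := by
    have hexpand : ∀ i, (m i : ℝ) * ((lam i - lam 1) * (lam i - lam 2) * (lam i - lam 3)) =
        m i * lam i ^ 3 - (lam 1 + lam 2 + lam 3) * (m i * lam i ^ 2) +
          (lam 1 * lam 2 + lam 1 * lam 3 + lam 2 * lam 3) * (m i * lam i ^ 1) -
          lam 1 * lam 2 * lam 3 * (m i * lam i ^ 0) := fun i => by ring
    simp only [hexpand, Finset.sum_sub_distrib, Finset.sum_add_distrib, ← Finset.mul_sum]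
    rw [h₀, h₁, h₂, h₃]
    ring
  rw [hpi, hpi]
  refine (hspec.1.mul_prod_abs_sub_eq_iff (m := fun i => (m i : ℝ))).trans ?_
  rw [hcubic, mul_eq_zero, or_iff_right hN, sub_eq_zero, eq_comm]

theorem stmt_13 {V : Type*} [Fintype V] [DecidableEq V] (G : SimpleGraph V)
    (n k : ℕ) (c a b : ℕ → ℕ) (lam : Fin 5 → ℝ) (m : Fin 5 → ℕ)
    (hn : Fintype.card V = n)
    (hconn : G.Connected)
    (hreg : G.IsRegularOfDegree k)
    (hdiam : ∀ u v : V, G.dist u v ≤ 4) (hdiam' : ∃ u v : V, G.dist u v = 4)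
    (hdrg : G.IsDistRegular 4 c a b)
    (hspec : G.HasSpectrum lam m)
    (hlam0 : lam 0 = (k : ℝ)) (hm0 : m 0 = 1)
    (pi : Fin 5 → ℝ) (hpi : ∀ i, pi i = ∏ j ∈ Finset.univ.erase i, |lam i - lam j|) :
    (m 0 : ℝ) * pi 0 = (m 4 : ℝ) * pi 4 ↔
      (k : ℝ) * (lam 1 + lam 2 + lam 3) + lam 1 * lam 2 * lam 3 = (k : ℝ) * a 1 :=
  stmt_13_general G k c a b lam m hreg hdiam' hdrg hspec pi hpi
end
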